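/- Let τ_U > 0, τ_ε > 0, and φ_U ∈ (−1,1), and for each n ≥ 3 let V_n = τ_U⁻¹·A_n(φ_U)⁻¹ + τ_ε⁻¹·I_n. Then for every fixed pair of natural-number indices i, j, the sequence n ↦ (V_n)_{ij} (defined for all n > max(i,j)) converges, as n → ∞, to τ_U⁻¹·(1/(2√(1−φ_U²)))·(φ_U/(1+√(1−φ_U²)))^{|i−j|} when i ≠ j, and to τ_U⁻¹/(2√(1−φ_U²)) + τ_ε⁻¹ when i = j. -/

import Mathlib

/-
Put `φ = 2r / (1 + r²)` with `r = φ / (1 + √(1 - φ²))`, so that `|r| < 1` and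
`1 - φ r = √(1 - φ²)`. The matrix `A_n(φ) = 2I - φ(P + P⁻¹)`, with `P` the cyclic shift, is
circulant, and so is its inverse: its first column is `g(k) = rᵏ + rⁿ⁻ᵏ` divided by
`2√(1 - φ²)(1 - rⁿ)`. Indeed `φ (g(k - 1) + g(k + 1)) = 2 g(k)` for `0 < k < n`, since both
`rᵏ` and `r⁻ᵏ` solve this recurrence, and the defect at `k = 0` is exactly the normalising
constant. As `n → ∞` the terms `rⁿ⁻ᵏ` and `rⁿ` vanish, leaving `rᵏ / (2√(1 - φ²))`.
-/

open Matrix Filter Topology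

/-- The unscaled conditional autoregressive (CAR) precision matrix of the ring graph on
`n` vertices: entries are `2` on the diagonal, `-φ` at positions with `|i - j| = 1` or
`|i - j| = n - 1`, and `0` otherwise. -/
noncomputable def ringA (n : ℕ) (φ : ℝ) : Matrix (Fin n) (Fin n) ℝ :=
  Matrix.of fun i j =>
    if i = j then 2
    else if Nat.dist i.val j.val = 1 ∨ Nat.dist i.val j.val = n - 1 then -φ
    else 0

section Circulant

variable {R ι : Type*} [CommRing R] [Fintype ι] [DecidableEq ι] [AddCommGroup ι]

theorem circulant_single_one_mul (a : ι) (w : ι → R) :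
    circulant (Pi.single a 1) * circulant w = circulant fun k => w (k - a) := by
  rw [circulant_mul]
  congr 1
  ext k
  simp only [mulVec, dotProduct, circulant_apply, Pi.single_apply, sub_eq_iff_comm, ite_mul,
    one_mul, zero_mul, Finset.sum_ite_eq, Finset.mem_univ, if_true]

end Circulant

theorem Fin.sub_eq_one_iff_val {m : ℕ} (i j : Fin (m + 1)) :
    i - j = 1 ↔ i.val = j.val + 1 ∨ (i.val = 0 ∧ j.val = m) := by
  rw [sub_eq_iff_eq_add', Fin.ext_iff, Fin.val_add_one]
  split_ifs with h <;> simp only [Fin.ext_iff, Fin.val_last] at h <;> omega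

theorem ringA_eq_circulant {n : ℕ} [NeZero n] (hn : 3 ≤ n) (φ : ℝ) :
    ringA n φ = (2 : ℝ) • 1 - φ • (circulant (Pi.single 1 1) + circulant (Pi.single (-1) 1)) := by
  obtain ⟨m, rfl⟩ : ∃ m, n = m + 3 := ⟨n - 3, by omega⟩
  ext i j
  have hsub_one := Fin.sub_eq_one_iff_val i j
  have hsub_neg_one : i - j = -1 ↔ j.val = i.val + 1 ∨ (j.val = 0 ∧ i.val = m + 2) := by
    rw [← Fin.sub_eq_one_iff_val j i, ← neg_sub, neg_inj]
  simp only [ringA, of_apply, Matrix.sub_apply, Matrix.smul_apply, Matrix.add_apply, one_apply,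
    circulant_apply, Pi.single_apply, hsub_one, hsub_neg_one, Fin.ext_iff, smul_eq_mul]
  split_ifs <;> first | (exfalso; (try simp only [Nat.dist] at *); omega) | ring

def ringGreen (n : ℕ) (r : ℝ) (k : ℕ) : ℝ := r ^ k + r ^ (n - k)

section RingGreen

variable {n : ℕ} {r φ : ℝ}

theorem ringGreen_sub {k : ℕ} (hk : k ≤ n) : ringGreen n r (n - k) = ringGreen n r k := by
  rw [ringGreen, ringGreen, Nat.sub_sub_self hk, add_comm]

theorem ringGreen_recurrence (hφ : φ * (1 + r ^ 2) = 2 * r) {k : ℕ} (hk : k + 2 ≤ n) :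
    φ * (ringGreen n r k + ringGreen n r (k + 2)) = 2 * ringGreen n r (k + 1) := by
  obtain ⟨l, rfl⟩ : ∃ l, n = k + l + 2 := ⟨n - k - 2, by omega⟩
  simp only [ringGreen, show k + l + 2 - k = l + 2 by omega,
    show k + l + 2 - (k + 2) = l by omega, show k + l + 2 - (k + 1) = l + 1 by omega]
  linear_combination (r ^ k + r ^ l) * hφ

theorem ringGreen_boundary (hφ : φ * (1 + r ^ 2) = 2 * r) (hn : 1 ≤ n) :
    2 * ringGreen n r 0 - 2 * φ * ringGreen n r 1 = 2 * (1 - φ * r) * (1 - r ^ n) := by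
  obtain ⟨l, rfl⟩ : ∃ l, n = l + 1 := ⟨n - 1, by omega⟩
  simp only [ringGreen, Nat.sub_zero, Nat.add_sub_cancel]
  linear_combination (-2 * r ^ l) * hφ

theorem ringGreen_cyclic_recurrence [NeZero n] (hn : 3 ≤ n) (hφ : φ * (1 + r ^ 2) = 2 * r)
    (k : Fin n) :
    2 * ringGreen n r k - φ * (ringGreen n r ↑(k - 1) + ringGreen n r ↑(k + 1)) =
      ((2 * (1 - φ * r) * (1 - r ^ n)) • Pi.single 0 1 : Fin n → ℝ) k := by
  obtain ⟨m, rfl⟩ : ∃ m, n = m + 3 := ⟨n - 3, by omega⟩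
  rcases eq_or_ne k 0 with rfl | hk
  · have hwrap : ringGreen (m + 3) r (m + 2) = ringGreen (m + 3) r 1 :=
      ringGreen_sub (k := 1) (by omega)
    simp only [zero_sub, Fin.coe_neg_one, zero_add, Fin.val_zero, Fin.val_one, hwrap,
      Pi.smul_apply, Pi.single_eq_same, smul_eq_mul, mul_one]
    linear_combination ringGreen_boundary (n := m + 3) hφ (by omega)
  · obtain ⟨j, hj⟩ := Nat.exists_eq_add_one_of_ne_zero (Fin.val_ne_zero_iff.mpr hk)
    have hprev : ((k - 1 : Fin (m + 3)) : ℕ) = j := by rw [Fin.coe_sub_one, if_neg hk, hj]; rfl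
    have hnext : ringGreen (m + 3) r ↑(k + 1) = ringGreen (m + 3) r (j + 2) := by
      rw [Fin.val_add_one]
      split_ifs with hlast
      · rw [Fin.ext_iff, Fin.val_last] at hlast
        rw [← ringGreen_sub (Nat.zero_le _)]
        congr 1
        omega
      · rw [hj]
    have hk_lt := k.isLt
    simp only [hprev, hnext, hj, Pi.smul_apply, Pi.single_eq_of_ne hk, smul_zero]
    linear_combination -(ringGreen_recurrence (n := m + 3) hφ (k := j) (by omega))

end RingGreen

theorem ringA_mul_circulant_ringGreen {n : ℕ} [NeZero n] (hn : 3 ≤ n) {r φ : ℝ}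
    (hφ : φ * (1 + r ^ 2) = 2 * r) :
    ringA n φ * circulant (fun k : Fin n => ringGreen n r k) =
      (2 * (1 - φ * r) * (1 - r ^ n)) • 1 := by
  rw [← circulant_single_one, ← circulant_smul, ringA_eq_circulant hn, sub_mul, Matrix.smul_mul,
    Matrix.smul_mul, add_mul, Matrix.one_mul, circulant_single_one_mul, circulant_single_one_mul,
    ← circulant_add, ← circulant_smul, ← circulant_smul, ← circulant_sub]
  congr 1
  ext k
  simp only [Pi.sub_apply, Pi.smul_apply, Pi.add_apply, sub_neg_eq_add, smul_eq_mul]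
  exact ringGreen_cyclic_recurrence hn hφ k

theorem ringGreen_val_sub {n : ℕ} (r : ℝ) (i j : Fin n) :
    ringGreen n r ↑(i - j) = ringGreen n r (Nat.dist i j) := by
  rcases le_or_gt j i with h | h
  · rw [Fin.sub_val_of_le h, Nat.dist, Nat.sub_eq_zero_of_le (Fin.le_def.mp h),
      add_zero]
  · have hdist : Nat.dist i j = j - i := by
      rw [Nat.dist, Nat.sub_eq_zero_of_le (Fin.lt_def.mp h).le, zero_add]
    rw [Fin.coe_sub_iff_lt.mpr h, hdist, ← ringGreen_sub (n := n) (by omega)]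
    congr 1
    omega

theorem inv_ringA {n : ℕ} [NeZero n] (hn : 3 ≤ n) {r φ : ℝ} (hφ : φ * (1 + r ^ 2) = 2 * r)
    (hc : 2 * (1 - φ * r) * (1 - r ^ n) ≠ 0) :
    (ringA n φ)⁻¹ =
      (2 * (1 - φ * r) * (1 - r ^ n))⁻¹ • circulant (fun k : Fin n => ringGreen n r k) :=
  inv_eq_right_inv <| by
    rw [Matrix.mul_smul, ringA_mul_circulant_ringGreen hn hφ, smul_smul, inv_mul_cancel₀ hc,
      one_smul]

noncomputable def carRoot (φ : ℝ) : ℝ := φ / (1 + √(1 - φ ^ 2))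

section CarRoot

variable {φ : ℝ}

theorem sq_sqrt_one_sub_sq (hφ : |φ| ≤ 1) : √(1 - φ ^ 2) ^ 2 = 1 - φ ^ 2 :=
  Real.sq_sqrt (sub_nonneg.mpr ((sq_le_one_iff_abs_le_one φ).mpr hφ))

theorem sqrt_one_sub_sq_pos (hφ : |φ| < 1) : 0 < √(1 - φ ^ 2) :=
  Real.sqrt_pos.mpr (sub_pos.mpr ((sq_lt_one_iff_abs_lt_one φ).mpr hφ))

theorem carRoot_spec (hφ : |φ| ≤ 1) : φ * (1 + carRoot φ ^ 2) = 2 * carRoot φ := by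
  have hpos : 0 < 1 + √(1 - φ ^ 2) := by positivity
  rw [carRoot]
  field_simp
  linear_combination φ * sq_sqrt_one_sub_sq hφ

theorem one_sub_mul_carRoot (hφ : |φ| ≤ 1) : 1 - φ * carRoot φ = √(1 - φ ^ 2) := by
  have hpos : 0 < 1 + √(1 - φ ^ 2) := by positivity
  rw [carRoot]
  field_simp
  linear_combination -sq_sqrt_one_sub_sq hφ

theorem abs_carRoot_lt_one (hφ : |φ| < 1) : |carRoot φ| < 1 := by
  have hpos : 0 < 1 + √(1 - φ ^ 2) := by positivity
  rw [carRoot, abs_div, abs_of_pos hpos, div_lt_one hpos]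
  linarith [Real.sqrt_nonneg (1 - φ ^ 2)]

end CarRoot

theorem ringA_inv_apply {n : ℕ} [NeZero n] (hn : 3 ≤ n) {φ : ℝ} (hφ : |φ| < 1) (i j : Fin n) :
    (ringA n φ)⁻¹ i j =
      ringGreen n (carRoot φ) (Nat.dist i j) / (2 * √(1 - φ ^ 2) * (1 - carRoot φ ^ n)) := by
  have hrn : |carRoot φ| ^ n < 1 := pow_lt_one₀ (abs_nonneg _) (abs_carRoot_lt_one hφ) (by omega)
  have hc : 2 * (1 - φ * carRoot φ) * (1 - carRoot φ ^ n) ≠ 0 := by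
    rw [one_sub_mul_carRoot hφ.le]
    have := sqrt_one_sub_sq_pos hφ
    nlinarith [le_abs_self (carRoot φ ^ n), abs_pow (carRoot φ) n]
  rw [inv_ringA hn (carRoot_spec hφ.le) hc, one_sub_mul_carRoot hφ.le, Matrix.smul_apply,
    circulant_apply, ringGreen_val_sub, smul_eq_mul, inv_mul_eq_div]

theorem tendsto_ringGreen {r : ℝ} (hr : |r| < 1) (k : ℕ) :
    Tendsto (fun n => ringGreen n r k) atTop (𝓝 (r ^ k)) := by
  have h := ((tendsto_pow_atTop_nhds_zero_of_abs_lt_one hr).comp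
    (tendsto_sub_atTop_nat k)).const_add (r ^ k)
  rw [add_zero] at h
  exact h

theorem tendsto_ringA_inv_entry {φ : ℝ} (hφ : |φ| < 1) (d : ℕ) :
    Tendsto (fun n => ringGreen n (carRoot φ) d / (2 * √(1 - φ ^ 2) * (1 - carRoot φ ^ n)))
      atTop (𝓝 (carRoot φ ^ d / (2 * √(1 - φ ^ 2)))) := by
  have hr := abs_carRoot_lt_one hφ
  have hden := ((tendsto_pow_atTop_nhds_zero_of_abs_lt_one hr).const_sub 1).const_mul
    (2 * √(1 - φ ^ 2))
  rw [sub_zero, mul_one] at hden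
  exact (tendsto_ringGreen hr d).div hden (by linarith [sqrt_one_sub_sq_pos hφ])

theorem limiting_conditional_covariance_entries_general
    (τU τε φU : ℝ)
    (hφU : φU ∈ Set.Ioo (-1 : ℝ) 1) (i j : ℕ) :
    Tendsto
      (fun n : ℕ =>
        if h : i < n ∧ j < n then
          (τU⁻¹ • (ringA n φU)⁻¹ + τε⁻¹ • (1 : Matrix (Fin n) (Fin n) ℝ)) ⟨i, h.1⟩ ⟨j, h.2⟩
        else 0)
      atTop
      (𝓝 (if i = j then
            τU⁻¹ / (2 * Real.sqrt (1 - φU ^ 2)) + τε⁻¹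
          else
            τU⁻¹ * (1 / (2 * Real.sqrt (1 - φU ^ 2))) *
              (φU / (1 + Real.sqrt (1 - φU ^ 2))) ^ Nat.dist i j)) := by
  have hφ : |φU| < 1 := abs_lt.mpr hφU
  have hlim := ((tendsto_ringA_inv_entry hφ (Nat.dist i j)).const_mul τU⁻¹).add_const
    (if i = j then τε⁻¹ else 0)
  have hvalue : (if i = j then τU⁻¹ / (2 * √(1 - φU ^ 2)) + τε⁻¹
      else τU⁻¹ * (1 / (2 * √(1 - φU ^ 2))) * carRoot φU ^ Nat.dist i j) =
      τU⁻¹ * (carRoot φU ^ Nat.dist i j / (2 * √(1 - φU ^ 2))) + if i = j then τε⁻¹ else 0 := by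
    split_ifs with hij
    · rw [hij, Nat.dist_self, pow_zero, one_div, mul_comm, div_eq_mul_inv]
    · ring
  rw [← carRoot, hvalue]
  refine hlim.congr' ?_
  filter_upwards [eventually_ge_atTop (max (max i j + 1) 3)] with n hn
  have : NeZero n := ⟨by omega⟩
  rw [dif_pos ⟨by omega, by omega⟩, Matrix.add_apply, Matrix.smul_apply, Matrix.smul_apply,
    ringA_inv_apply (by omega) hφ, one_apply]
  simp only [Fin.mk.injEq, smul_eq_mul, mul_ite, mul_one, mul_zero]

/-- Limiting entrywise formula for the conditional covariance
`V_n = τ_U⁻¹ • A_n(φ_U)⁻¹ + τ_ε⁻¹ • I_n` on the ring graph (used in Theorem 2). -/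
theorem limiting_conditional_covariance_entries
    (τU τε φU : ℝ) (hτU : 0 < τU) (hτε : 0 < τε)
    (hφU : φU ∈ Set.Ioo (-1 : ℝ) 1) (i j : ℕ) :
    Tendsto
      (fun n : ℕ =>
        if h : i < n ∧ j < n then
          (τU⁻¹ • (ringA n φU)⁻¹ + τε⁻¹ • (1 : Matrix (Fin n) (Fin n) ℝ)) ⟨i, h.1⟩ ⟨j, h.2⟩
        else 0)
      atTop
      (𝓝 (if i = j then
            τU⁻¹ / (2 * Real.sqrt (1 - φU ^ 2)) + τε⁻¹
          else
            τU⁻¹ * (1 / (2 * Real.sqrt (1 - φU ^ 2))) *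
              (φU / (1 + Real.sqrt (1 - φU ^ 2))) ^ Nat.dist i j)) :=
  limiting_conditional_covariance_entries_general τU τε φU hφU i j
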